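/- arXiv:1603.04604 — 3 statements merged into one kernel-verified Lean document; each statement's English description precedes it below -/
import Mathlib

section
/- There exists C > 0 such that for all complex z with Re z ≥ 1 + δ² or |Re z − 1| ≤ δ² (and 0 < |Im z| ≤ δ₁ Re z with δ₁ small), and all τ ∈ [κ, 1], one has Re √(1 − (τz)²) ≥ C |Im z|, where the square root has positive real part. -/
open Complex

set_option maxHeartbeats 1000000

/-- For `z` with `Re z ≥ 1 + δ²` or `|Re z − 1| ≤ δ²`, `0 < |Im z| ≤ δ₁ Re z` (δ₁ small),
and `τ ∈ [κ,1]`, one has `Re √(1 − (τz)²) ≥ C |Im z|` (principal square root). -/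
theorem stmt7 (κ : ℝ) (hκ0 : 0 < κ) (hκ1 : κ < 1)
    (δ : ℝ) (hδ0 : 0 < δ) (hδ1 : δ < 1) :
    ∃ δ₁ > (0 : ℝ), ∃ C > (0 : ℝ), ∀ z : ℂ, ∀ τ : ℝ,
      (1 + δ ^ 2 ≤ z.re ∨ |z.re - 1| ≤ δ ^ 2) →
      0 < |z.im| → |z.im| ≤ δ₁ * z.re → τ ∈ Set.Icc κ 1 →
      C * |z.im| ≤ (((1 : ℂ) - ((τ : ℂ) * z) ^ 2) ^ ((1 : ℂ) / 2)).re := by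
  have hδ2 : δ ^ 2 < 1 := by nlinarith
  have hBpos : (0:ℝ) < (1 - δ ^ 2) ^ 2 := by nlinarith
  have hB1 : (1 - δ ^ 2) ^ 2 ≤ 1 := by nlinarith [sq_nonneg δ]
  have hκ4 : κ ^ 4 ≤ 1 := by simpa using pow_le_pow_left₀ hκ0.le hκ1.le 4
  have hκ4p : (0:ℝ) < κ ^ 4 := by positivity
  have hCpos : (0:ℝ) < κ ^ 4 * (1 - δ ^ 2) ^ 2 / 3 := by positivity
  have hC1 : κ ^ 4 * (1 - δ ^ 2) ^ 2 / 3 ≤ 1 := by nlinarith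
  have hCC : (κ ^ 4 * (1 - δ ^ 2) ^ 2 / 3) ^ 2 ≤ κ ^ 4 * (1 - δ ^ 2) ^ 2 / 3 := by nlinarith
  refine ⟨1, one_pos, κ ^ 4 * (1 - δ ^ 2) ^ 2 / 3, hCpos, ?_⟩
  intro z τ hre him hslope hτ
  obtain ⟨hτκ, hτ1⟩ := hτ
  set x := z.re with hxdef
  set y := z.im with hydef
  have hx : 1 - δ ^ 2 ≤ x := by
    rcases hre with h | h
    · nlinarith [sq_nonneg δ]
    · have := abs_le.mp h; linarith [this.1]
  have hx0 : 0 < x := by linarith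
  have hτ0 : 0 < τ := lt_of_lt_of_le hκ0 hτκ
  have hy0 : y ≠ 0 := by
    intro h; rw [h] at him; simp at him
  set u : ℂ := (1 : ℂ) - ((τ : ℂ) * z) ^ 2 with hudef
  have hure : u.re = 1 - τ ^ 2 * (x ^ 2 - y ^ 2) := by
    simp [hudef, Complex.sub_re, Complex.mul_re, Complex.mul_im, sq]
    ring
  have huim : u.im = -(2 * τ ^ 2 * x * y) := by
    simp [hudef, Complex.sub_im, Complex.mul_re, Complex.mul_im, sq]
    ring
  have huim0 : u.im ≠ 0 := by
    rw [huim]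
    intro h
    have : τ ^ 2 * x * y = 0 := by linarith
    rcases mul_eq_zero.mp this with h' | h'
    · rcases mul_eq_zero.mp h' with h'' | h''
      · exact absurd h'' (by positivity)
      · exact absurd h'' (ne_of_gt hx0)
    · exact hy0 h'
  have hu0 : u ≠ 0 := by
    intro h; rw [h] at huim0; simp at huim0
  set s : ℂ := u ^ ((1 : ℂ) / 2) with hsdef
  have hs2 : s ^ 2 = u := by
    have := Complex.cpow_nat_inv_pow u (two_ne_zero)
    rw [hsdef]
    rw [show ((1 : ℂ) / 2) = ((2 : ℕ) : ℂ)⁻¹ by norm_num]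
    exact this
  -- Re s ≥ 0
  have hsre0 : 0 ≤ s.re := by
    rw [hsdef, Complex.cpow_def_of_ne_zero hu0, Complex.exp_re]
    have him2 : (Complex.log u * (1 / 2)).im = u.arg / 2 := by
      simp [Complex.mul_im, Complex.log_im]
      ring
    rw [him2]
    have h1 : -(Real.pi / 2) ≤ u.arg / 2 := by
      have := Complex.neg_pi_lt_arg u; linarith
    have h2 : u.arg / 2 ≤ Real.pi / 2 := by
      have := Complex.arg_le_pi u; linarith
    have := Real.cos_nonneg_of_mem_Icc ⟨h1, h2⟩
    positivity
  set r := s.re with hrdef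
  set i := s.im with hidef
  have hre_eq : r ^ 2 - i ^ 2 = u.re := by
    have h := congrArg Complex.re hs2
    rw [pow_two, Complex.mul_re] at h
    rw [hrdef, hidef]
    linear_combination h
  have him_eq : 2 * r * i = u.im := by
    have h := congrArg Complex.im hs2
    rw [pow_two, Complex.mul_im] at h
    rw [hrdef, hidef]
    linear_combination h
    
  -- |y| ≤ x
  have hyx : |y| ≤ x := by simpa using hslope
  have hy2 : y ^ 2 ≤ x ^ 2 := by
    nlinarith [abs_nonneg y, _root_.sq_abs y]
  have hB : (1 - δ ^ 2) ^ 2 ≤ x ^ 2 := by nlinarith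
  -- bound |u|^2
  have hid : (r ^ 2 + i ^ 2) ^ 2 = u.re ^ 2 + u.im ^ 2 := by
    rw [← hre_eq, ← him_eq]; ring
  have h1 : u.re ^ 2 + u.im ^ 2 ≤ (1 + τ ^ 2 * (x ^ 2 + y ^ 2)) ^ 2 := by
    rw [hure, huim]; nlinarith [sq_nonneg (τ * x), sq_nonneg τ]
  have hbound : (r ^ 2 + i ^ 2) * (1 - δ ^ 2) ^ 2 ≤ 3 * x ^ 2 := by
    have hsum : r ^ 2 + i ^ 2 ≤ 1 + τ ^ 2 * (x ^ 2 + y ^ 2) := by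
      have hLnn : 0 ≤ r ^ 2 + i ^ 2 := by positivity
      have hRnn : (0:ℝ) ≤ 1 + τ ^ 2 * (x ^ 2 + y ^ 2) := by positivity
      calc r ^ 2 + i ^ 2 = Real.sqrt ((r ^ 2 + i ^ 2) ^ 2) := (Real.sqrt_sq hLnn).symm
        _ ≤ Real.sqrt ((1 + τ ^ 2 * (x ^ 2 + y ^ 2)) ^ 2) := by
            apply Real.sqrt_le_sqrt; rw [hid]; exact h1
        _ = 1 + τ ^ 2 * (x ^ 2 + y ^ 2) := Real.sqrt_sq hRnn
    have hstep : (1 + τ ^ 2 * (x ^ 2 + y ^ 2)) * (1 - δ ^ 2) ^ 2 ≤ 3 * x ^ 2 := by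
      have hτ2 : τ ^ 2 ≤ 1 := by nlinarith
      have ht1 : τ ^ 2 * (x ^ 2 + y ^ 2) ≤ 2 * x ^ 2 := by nlinarith [sq_nonneg τ]
      nlinarith [mul_le_mul_of_nonneg_right ht1 (le_of_lt hBpos), hB, hB1, sq_nonneg x]
    calc (r ^ 2 + i ^ 2) * (1 - δ ^ 2) ^ 2
        ≤ (1 + τ ^ 2 * (x ^ 2 + y ^ 2)) * (1 - δ ^ 2) ^ 2 :=
          mul_le_mul_of_nonneg_right hsum (le_of_lt hBpos)
      _ ≤ 3 * x ^ 2 := hstep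
  -- key lower bound on r^2
  have hri : (r * i) ^ 2 = τ ^ 4 * x ^ 2 * y ^ 2 := by
    have h : (2 * r * i) ^ 2 = (-(2 * τ ^ 2 * x * y)) ^ 2 := by rw [him_eq, huim]
    linear_combination h / 4
  have hr2 : κ ^ 4 * (1 - δ ^ 2) ^ 2 / 3 * y ^ 2 ≤ r ^ 2 := by
    have h1' : τ ^ 4 * x ^ 2 * y ^ 2 ≤ r ^ 2 * (r ^ 2 + i ^ 2) := by
      nlinarith [sq_nonneg r, sq_nonneg i, hri]
    have h2' : τ ^ 4 * x ^ 2 * y ^ 2 * (1 - δ ^ 2) ^ 2 ≤ r ^ 2 * (3 * x ^ 2) := by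
      calc τ ^ 4 * x ^ 2 * y ^ 2 * (1 - δ ^ 2) ^ 2
          ≤ r ^ 2 * (r ^ 2 + i ^ 2) * (1 - δ ^ 2) ^ 2 :=
            mul_le_mul_of_nonneg_right h1' (le_of_lt hBpos)
        _ = r ^ 2 * ((r ^ 2 + i ^ 2) * (1 - δ ^ 2) ^ 2) := by ring
        _ ≤ r ^ 2 * (3 * x ^ 2) := mul_le_mul_of_nonneg_left hbound (sq_nonneg r)
    have hτ4 : κ ^ 4 ≤ τ ^ 4 := pow_le_pow_left₀ hκ0.le hτκ 4
    have hnn : (0:ℝ) ≤ x ^ 2 * y ^ 2 * (1 - δ ^ 2) ^ 2 := by positivity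
    have h4' : κ ^ 4 * (x ^ 2 * y ^ 2 * (1 - δ ^ 2) ^ 2) ≤ τ ^ 4 * (x ^ 2 * y ^ 2 * (1 - δ ^ 2) ^ 2) :=
      mul_le_mul_of_nonneg_right hτ4 hnn
    have h3' : κ ^ 4 * (1 - δ ^ 2) ^ 2 / 3 * y ^ 2 * x ^ 2 ≤ r ^ 2 * x ^ 2 := by
      linarith only [h4', h2']
    have hx2 : (0:ℝ) < x ^ 2 := by positivity
    exact le_of_mul_le_mul_right h3' hx2
  -- conclusion
  set C := κ ^ 4 * (1 - δ ^ 2) ^ 2 / 3 with hCdef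
  have hsq : (C * |y|) ^ 2 ≤ r ^ 2 := by
    have he : (C * |y|) ^ 2 = C ^ 2 * y ^ 2 := by rw [mul_pow, _root_.sq_abs]
    rw [he]
    have h5 : C ^ 2 * y ^ 2 ≤ C * y ^ 2 := mul_le_mul_of_nonneg_right hCC (sq_nonneg y)
    have h6 : C * y ^ 2 = C * y ^ 2 := rfl
    linarith only [h5, hr2]
  calc C * |y| = Real.sqrt ((C * |y|) ^ 2) := (Real.sqrt_sq (by positivity)).symm
    _ ≤ Real.sqrt (r ^ 2) := Real.sqrt_le_sqrt hsq
    _ = r := Real.sqrt_sq hsre0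
end

section
/- Assume c̃₁ = c̃₂ > 0 and ñ₁ ≠ ñ₂ (both positive). With ρ̃_j as above and λ with Re λ ≫ 1, |Im λ| ≤ δ₁ Re λ, the function g(σ) = c̃₁ρ̃₁(σ) − c̃₂ρ̃₂(σ) is nonzero for all σ ≥ 0 and satisfies |g(σ)|^{−1} ≤ C⟨σ/|λ|²⟩^{1/2}, with C independent of σ and λ. -/
/-!
Since `c̃₁ = c̃₂ =: c`, subtracting the two equations for `ρ̃_j²` gives the factorisation
`(c ρ̃₁ - c ρ̃₂)(ρ̃₁ + ρ̃₂) = ñ₂ - ñ₁ ≠ 0`, so `g ≠ 0` and `|g|⁻¹ = |ρ̃₁ + ρ̃₂| / |ñ₂ - ñ₁|`.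
For `|λ| ≥ 1` each `|ρ̃_j|²` is `O(1 + σ/|λ|²)`, and `(1 + x)² ≤ 2 (1 + x²)` turns this into
`|ρ̃_j| = O(⟨σ/|λ|²⟩^{1/2})`.
-/

open Complex

lemma mul_sub_mul_mul_add_eq_of_sq_eq {K : Type*} [Field K] {c n₁ n₂ s ρ₁ ρ₂ : K} (hc : c ≠ 0)
    (h₁ : ρ₁ ^ 2 = s - n₁ / c) (h₂ : ρ₂ ^ 2 = s - n₂ / c) :
    (c * ρ₁ - c * ρ₂) * (ρ₁ + ρ₂) = n₂ - n₁ := by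
  have : c * (n₂ / c) - c * (n₁ / c) = n₂ - n₁ := by field_simp
  linear_combination c * h₁ - c * h₂ + this

lemma norm_sq_le_of_sq_eq_mul_inv_sq {ρ lam a b : ℂ} (h : ρ ^ 2 = a * lam⁻¹ ^ 2 - b) :
    ‖ρ‖ ^ 2 ≤ ‖a‖ / ‖lam‖ ^ 2 + ‖b‖ := by
  calc ‖ρ‖ ^ 2 = ‖a * lam⁻¹ ^ 2 - b‖ := by rw [← norm_pow, h]
    _ ≤ ‖a * lam⁻¹ ^ 2‖ + ‖b‖ := norm_sub_le _ _
    _ = ‖a‖ / ‖lam‖ ^ 2 + ‖b‖ := by rw [norm_mul, norm_pow, norm_inv, div_eq_mul_inv, inv_pow]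

lemma le_sqrt_mul_one_add_sq_rpow_quarter {r K x : ℝ} (hr : 0 ≤ r) (hK : 0 ≤ K)
    (h : r ^ 2 ≤ K * (1 + x)) : r ≤ √(2 * K) * (1 + x ^ 2) ^ (1 / 4 : ℝ) := by
  have hy : ((1 + x ^ 2) ^ (1 / 4 : ℝ)) ^ 4 = 1 + x ^ 2 := by
    rw [← Real.rpow_natCast, ← Real.rpow_mul (by positivity)]
    norm_num
  have hs : √(2 * K) ^ 2 = 2 * K := Real.sq_sqrt (by positivity)
  refine (pow_le_pow_iff_left₀ hr (by positivity) (four_ne_zero)).1 ?_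
  calc r ^ 4 = (r ^ 2) ^ 2 := by ring
    _ ≤ (K * (1 + x)) ^ 2 := pow_le_pow_left₀ (sq_nonneg r) h 2
    _ ≤ (2 * K) ^ 2 * (1 + x ^ 2) := by nlinarith [sq_nonneg (1 - x), sq_nonneg K]
    _ = (√(2 * K) ^ 2) ^ 2 * ((1 + x ^ 2) ^ (1 / 4 : ℝ)) ^ 4 := by rw [hs, hy]
    _ = _ := by ring

lemma norm_le_of_sq_eq {ρ lam a b : ℂ} {σ : ℝ} (hσ : 0 ≤ σ) (hlam : 1 ≤ ‖lam‖)
    (h : ρ ^ 2 = ((σ : ℂ) + a) * lam⁻¹ ^ 2 - b) :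
    ‖ρ‖ ≤ √(2 * (‖a‖ + ‖b‖ + 1)) * (1 + (σ / ‖lam‖ ^ 2) ^ 2) ^ (1 / 4 : ℝ) := by
  refine le_sqrt_mul_one_add_sq_rpow_quarter (norm_nonneg ρ) (by positivity) ?_
  have hlam2 : 1 ≤ ‖lam‖ ^ 2 := one_le_pow₀ hlam
  have ha : ‖a‖ / ‖lam‖ ^ 2 ≤ ‖a‖ := div_le_self (norm_nonneg a) hlam2
  have hx : 0 ≤ σ / ‖lam‖ ^ 2 := by positivity
  calc ‖ρ‖ ^ 2 ≤ ‖(σ : ℂ) + a‖ / ‖lam‖ ^ 2 + ‖b‖ := norm_sq_le_of_sq_eq_mul_inv_sq h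
    _ ≤ (σ + ‖a‖) / ‖lam‖ ^ 2 + ‖b‖ := by
        gcongr
        exact (norm_add_le _ _).trans_eq (by rw [norm_real, Real.norm_of_nonneg hσ])
    _ ≤ σ / ‖lam‖ ^ 2 + ‖a‖ + ‖b‖ := by rw [add_div]; linarith
    _ ≤ (‖a‖ + ‖b‖ + 1) * (1 + σ / ‖lam‖ ^ 2) := by
        nlinarith [mul_nonneg (add_nonneg (norm_nonneg a) (norm_nonneg b)) hx]

theorem stmt9_general (d : ℕ)
    (c1 c2 n1 n2 : ℝ) (hc1 : 0 < c1)
    (hc : c1 = c2) (hn : n1 ≠ n2) :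
    ∃ δ₁ > (0 : ℝ), ∃ C₀ > (0 : ℝ), ∃ C > (0 : ℝ),
      ∀ (lam : ℂ) (σ : ℝ) (ρ1 ρ2 : ℂ),
        C₀ ≤ lam.re → |lam.im| ≤ δ₁ * lam.re → 0 ≤ σ →
        ρ1 ^ 2 = ((σ : ℂ) + (((d : ℂ) - 2) / 2) ^ 2) * lam⁻¹ ^ 2 - (n1 / c1 : ℝ) →
        ρ2 ^ 2 = ((σ : ℂ) + (((d : ℂ) - 2) / 2) ^ 2) * lam⁻¹ ^ 2 - (n2 / c2 : ℝ) →
        0 < ρ1.re → 0 < ρ2.re →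
        (c1 : ℂ) * ρ1 - (c2 : ℂ) * ρ2 ≠ 0 ∧
        ‖(c1 : ℂ) * ρ1 - (c2 : ℂ) * ρ2‖⁻¹ ≤
          C * (1 + (σ / ‖lam‖ ^ 2) ^ 2) ^ ((1 : ℝ) / 4) := by
  subst hc
  set a : ℂ := (((d : ℂ) - 2) / 2) ^ 2
  set C₁ := √(2 * (‖a‖ + ‖((n1 / c1 : ℝ) : ℂ)‖ + 1))
  set C₂ := √(2 * (‖a‖ + ‖((n2 / c1 : ℝ) : ℂ)‖ + 1))
  have hdn : (0 : ℝ) < |n2 - n1| := abs_pos.2 (sub_ne_zero.2 hn.symm)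
  refine ⟨1, one_pos, 1, one_pos, (C₁ + C₂) / |n2 - n1|, by positivity, ?_⟩
  intro lam σ ρ1 ρ2 hre _ hσ hρ1 hρ2 _ _
  have hlam : 1 ≤ ‖lam‖ := hre.trans (re_le_norm lam)
  have hprod : ((c1 : ℂ) * ρ1 - c1 * ρ2) * (ρ1 + ρ2) = ((n2 - n1 : ℝ) : ℂ) := by
    push_cast at hρ1 hρ2 ⊢
    exact mul_sub_mul_mul_add_eq_of_sq_eq (ofReal_ne_zero.2 hc1.ne') hρ1 hρ2
  have hn' : ((n2 - n1 : ℝ) : ℂ) ≠ 0 := ofReal_ne_zero.2 (sub_ne_zero.2 hn.symm)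
  have hg : (c1 : ℂ) * ρ1 - c1 * ρ2 ≠ 0 := left_ne_zero_of_mul (hprod ▸ hn')
  refine ⟨hg, ?_⟩
  have hinv : ‖(c1 : ℂ) * ρ1 - c1 * ρ2‖⁻¹ = ‖ρ1 + ρ2‖ / |n2 - n1| := by
    have hs : ρ1 + ρ2 ≠ 0 := right_ne_zero_of_mul (hprod ▸ hn')
    rw [← Real.norm_eq_abs, ← norm_real, ← hprod, norm_mul]
    field_simp
  rw [hinv, div_mul_eq_mul_div, div_le_div_iff_of_pos_right hdn, add_mul]
  exact (norm_add_le _ _).trans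
    (add_le_add (norm_le_of_sq_eq hσ hlam hρ1) (norm_le_of_sq_eq hσ hlam hρ2))

/-- Isotropic case: `c̃₁ = c̃₂`, `ñ₁ ≠ ñ₂`. Then `g(σ) = c̃₁ρ̃₁(σ) − c̃₂ρ̃₂(σ)` is nonzero
for all `σ ≥ 0` and `|g(σ)|⁻¹ ≤ C⟨σ/|λ|²⟩^{1/2}`, with `C` independent of `σ`, `λ`,
for `λ` with `Re λ` large and `|Im λ| ≤ δ₁ Re λ`. -/
theorem stmt9 (d : ℕ) (hd : 2 ≤ d)
    (c1 c2 n1 n2 : ℝ) (hc1 : 0 < c1) (hc2 : 0 < c2) (hn1 : 0 < n1) (hn2 : 0 < n2)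
    (hc : c1 = c2) (hn : n1 ≠ n2) :
    ∃ δ₁ > (0 : ℝ), ∃ C₀ > (0 : ℝ), ∃ C > (0 : ℝ),
      ∀ (lam : ℂ) (σ : ℝ) (ρ1 ρ2 : ℂ),
        C₀ ≤ lam.re → |lam.im| ≤ δ₁ * lam.re → 0 ≤ σ →
        ρ1 ^ 2 = ((σ : ℂ) + (((d : ℂ) - 2) / 2) ^ 2) * lam⁻¹ ^ 2 - (n1 / c1 : ℝ) →
        ρ2 ^ 2 = ((σ : ℂ) + (((d : ℂ) - 2) / 2) ^ 2) * lam⁻¹ ^ 2 - (n2 / c2 : ℝ) →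
        0 < ρ1.re → 0 < ρ2.re →
        (c1 : ℂ) * ρ1 - (c2 : ℂ) * ρ2 ≠ 0 ∧
        ‖(c1 : ℂ) * ρ1 - (c2 : ℂ) * ρ2‖⁻¹ ≤
          C * (1 + (σ / ‖lam‖ ^ 2) ^ 2) ^ ((1 : ℝ) / 4) :=
  stmt9_general d c1 c2 n1 n2 hc1 hc hn
end

section
/- Assume (c̃₁ − c̃₂)(c̃₁ñ₁ − c̃₂ñ₂) < 0 with all constants positive. Then for λ with Re λ ≥ C₀ and |Im λ| ≤ δ₁ Re λ, the function g(σ) = c̃₁ρ̃₁(σ) − c̃₂ρ̃₂(σ) is nonzero for all σ ≥ 0 and satisfies |g(σ)|^{−1} ≤ C⟨σ/|λ|²⟩^{−1/2}, i.e. |g(σ)| ≥ C^{−1}⟨σ/|λ|²⟩^{1/2}. -/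
/-!
Write `g = c₁ρ₁ - c₂ρ₂` and `D = c₁ρ₁ + c₂ρ₂`. Then `g D = c₁²ρ₁² - c₂²ρ₂² = A (σ + m²) λ⁻² - B`
with `A = c₁² - c₂²`, `B = c₁n₁ - c₂n₂`, `m = (d - 2)/2`. In the sector `|Im λ| ≤ Re λ / 2`
one has `Re λ⁻² ≥ (3/5)/|λ|²`, and the hypothesis says that `A` and `-B` have the same sign,
so the real part of `g D` has modulus at least `(3/5)|A| σ/|λ|² + |B| ≳ 1 + σ/|λ|²`.
On the other hand `|ρⱼ|² ≲ 1 + σ/|λ|²` once `|λ| ≥ 1`, so `|D| ≲ (1 + σ/|λ|²)^{1/2}`,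
and dividing gives `|g| ≳ (1 + σ/|λ|²)^{1/2}`.
-/

open Complex

theorem Complex.re_inv_sq_ge_of_abs_im_le {z : ℂ} {δ : ℝ} (h : |z.im| ≤ δ * z.re) :
    (1 - δ ^ 2) / (1 + δ ^ 2) / ‖z‖ ^ 2 ≤ (z⁻¹ ^ 2).re := by
  have him : z.im ^ 2 ≤ δ ^ 2 * z.re ^ 2 := by
    rw [← mul_pow, ← sq_abs z.im]
    exact pow_le_pow_left₀ (abs_nonneg _) h 2
  have hre : (z⁻¹ ^ 2).re = (z.re ^ 2 - z.im ^ 2) / (z.re ^ 2 + z.im ^ 2) ^ 2 := by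
    rw [inv_pow, inv_re, map_pow, normSq_apply, sq z, mul_re]
    ring
  rw [hre, Complex.sq_norm, normSq_apply, ← sq, ← sq]
  rcases eq_or_lt_of_le (add_nonneg (sq_nonneg z.re) (sq_nonneg z.im)) with h0 | hpos
  · simp [← h0]
  · rw [div_div, div_le_div_iff₀ (by positivity) (by positivity)]
    nlinarith [mul_nonneg hpos.le (sub_nonneg.2 him)]

theorem Complex.abs_mul_re_add_abs_le_norm_mul_sub {A B : ℝ} (hAB : A * B < 0) {w : ℂ}
    (hw : 0 ≤ w.re) : |A| * w.re + |B| ≤ ‖(A : ℂ) * w - B‖ := by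
  refine le_trans (le_of_eq ?_) (abs_re_le_norm _)
  rw [sub_re, re_ofReal_mul, ofReal_re]
  rcases mul_neg_iff.mp hAB with ⟨hA, hB⟩ | ⟨hA, hB⟩
  · rw [abs_of_pos hA, abs_of_neg hB, abs_of_nonneg (by nlinarith)]
    ring
  · rw [abs_of_neg hA, abs_of_pos hB, abs_of_nonpos (by nlinarith)]
    ring

theorem Complex.mul_sub_mul_mul_mul_add_mul {ρ1 ρ2 u : ℂ} {c1 c2 n1 n2 : ℝ} (hc1 : c1 ≠ 0)
    (hc2 : c2 ≠ 0) (hρ1 : ρ1 ^ 2 = u - (n1 / c1 : ℝ)) (hρ2 : ρ2 ^ 2 = u - (n2 / c2 : ℝ)) :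
    ((c1 : ℂ) * ρ1 - c2 * ρ2) * (c1 * ρ1 + c2 * ρ2)
      = ((c1 ^ 2 - c2 ^ 2 : ℝ) : ℂ) * u - (c1 * n1 - c2 * n2 : ℝ) := by
  have h1 : (c1 : ℂ) ^ 2 * (n1 / c1) = c1 * n1 := by
    field_simp [ofReal_ne_zero.2 hc1]
  have h2 : (c2 : ℂ) ^ 2 * (n2 / c2) = c2 * n2 := by
    field_simp [ofReal_ne_zero.2 hc2]
  push_cast at hρ1 hρ2 ⊢
  linear_combination (c1 : ℂ) ^ 2 * hρ1 - (c2 : ℂ) ^ 2 * hρ2 - h1 + h2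

theorem Complex.min_mul_one_add_div_le_norm_mul_sub {A B δ σ z : ℝ} {lam : ℂ}
    (hAB : A * B < 0) (him : |lam.im| ≤ δ * lam.re) (hδ : δ ^ 2 ≤ 1) (hσ : 0 ≤ σ) (hσz : σ ≤ z) :
    min ((1 - δ ^ 2) / (1 + δ ^ 2) * |A|) |B| * (1 + σ / ‖lam‖ ^ 2)
      ≤ ‖(A : ℂ) * ((z : ℂ) * lam⁻¹ ^ 2) - B‖ := by
  set κ := (1 - δ ^ 2) / (1 + δ ^ 2)
  have hw : κ / ‖lam‖ ^ 2 ≤ (lam⁻¹ ^ 2).re := re_inv_sq_ge_of_abs_im_le him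
  have hκ : 0 ≤ κ := div_nonneg (by linarith) (by positivity)
  have hw0 : 0 ≤ (lam⁻¹ ^ 2).re := le_trans (by positivity) hw
  have hs : 0 ≤ σ / ‖lam‖ ^ 2 := by positivity
  have hzw : κ * (σ / ‖lam‖ ^ 2) ≤ z * (lam⁻¹ ^ 2).re :=
    calc κ * (σ / ‖lam‖ ^ 2) = σ * (κ / ‖lam‖ ^ 2) := by ring
      _ ≤ σ * (lam⁻¹ ^ 2).re := mul_le_mul_of_nonneg_left hw hσ
      _ ≤ z * (lam⁻¹ ^ 2).re := mul_le_mul_of_nonneg_right hσz hw0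
  refine le_trans ?_ (abs_mul_re_add_abs_le_norm_mul_sub hAB ?_) <;> rw [re_ofReal_mul]
  · linarith [min_le_right (κ * |A|) |B|,
      mul_le_mul_of_nonneg_right (min_le_left (κ * |A|) |B|) hs,
      mul_le_mul_of_nonneg_left hzw (abs_nonneg A)]
  · exact mul_nonneg (hσ.trans hσz) hw0

theorem Complex.norm_le_of_sq_eq_mul_inv_sq_sub {ρ lam : ℂ} {σ m k : ℝ} (hσ : 0 ≤ σ)
    (hlam : 1 ≤ ‖lam‖) (hρ : ρ ^ 2 = ((σ + m ^ 2 : ℝ) : ℂ) * lam⁻¹ ^ 2 - k) :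
    ‖ρ‖ ≤ √(1 + m ^ 2 + |k|) * √(1 + σ / ‖lam‖ ^ 2) := by
  have hL : 1 ≤ ‖lam‖ ^ 2 := one_le_pow₀ hlam
  have hm : m ^ 2 / ‖lam‖ ^ 2 ≤ m ^ 2 := div_le_self (sq_nonneg m) hL
  have hs : 0 ≤ σ / ‖lam‖ ^ 2 := by positivity
  rw [← Real.sqrt_mul' _ (by positivity), Real.le_sqrt (norm_nonneg ρ) (by positivity),
    ← norm_pow, hρ]
  calc ‖((σ + m ^ 2 : ℝ) : ℂ) * lam⁻¹ ^ 2 - k‖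
      ≤ ‖((σ + m ^ 2 : ℝ) : ℂ) * lam⁻¹ ^ 2‖ + ‖(k : ℂ)‖ := norm_sub_le _ _
    _ = σ / ‖lam‖ ^ 2 + m ^ 2 / ‖lam‖ ^ 2 + |k| := by
      rw [norm_mul, norm_pow, norm_inv, norm_real, norm_real,
        Real.norm_of_nonneg (by positivity), Real.norm_eq_abs]
      ring
    _ ≤ (1 + m ^ 2 + |k|) * (1 + σ / ‖lam‖ ^ 2) := by
      nlinarith [mul_nonneg (add_nonneg (sq_nonneg m) (abs_nonneg k)) hs]

theorem Complex.norm_mul_add_mul_le {ρ1 ρ2 lam : ℂ} {c1 c2 σ m k1 k2 : ℝ} (hc1 : 0 ≤ c1)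
    (hc2 : 0 ≤ c2) (hσ : 0 ≤ σ) (hlam : 1 ≤ ‖lam‖)
    (hρ1 : ρ1 ^ 2 = ((σ + m ^ 2 : ℝ) : ℂ) * lam⁻¹ ^ 2 - k1)
    (hρ2 : ρ2 ^ 2 = ((σ + m ^ 2 : ℝ) : ℂ) * lam⁻¹ ^ 2 - k2) :
    ‖(c1 : ℂ) * ρ1 + c2 * ρ2‖
      ≤ (c1 * √(1 + m ^ 2 + |k1|) + c2 * √(1 + m ^ 2 + |k2|)) * √(1 + σ / ‖lam‖ ^ 2) :=
  calc ‖(c1 : ℂ) * ρ1 + c2 * ρ2‖ ≤ ‖(c1 : ℂ) * ρ1‖ + ‖(c2 : ℂ) * ρ2‖ := norm_add_le _ _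
    _ = c1 * ‖ρ1‖ + c2 * ‖ρ2‖ := by
      rw [norm_mul, norm_mul, norm_real, norm_real, Real.norm_of_nonneg hc1,
        Real.norm_of_nonneg hc2]
    _ ≤ c1 * (√(1 + m ^ 2 + |k1|) * √(1 + σ / ‖lam‖ ^ 2))
        + c2 * (√(1 + m ^ 2 + |k2|) * √(1 + σ / ‖lam‖ ^ 2)) := by
      gcongr
      · exact norm_le_of_sq_eq_mul_inv_sq_sub hσ hlam hρ1
      · exact norm_le_of_sq_eq_mul_inv_sq_sub hσ hlam hρ2
    _ = _ := by ring

theorem Real.div_mul_le_of_mul_sq_le_mul {x y a b t : ℝ} (hb : 0 < b) (ht : 0 < t)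
    (hx : 0 ≤ x) (hxy : a * t ^ 2 ≤ x * y) (hy : y ≤ b * t) : a / b * t ≤ x := by
  rw [div_mul_eq_mul_div, div_le_iff₀ hb]
  have : a * t * t ≤ x * b * t := by nlinarith [mul_le_mul_of_nonneg_left hy hx]
  exact le_of_mul_le_mul_right this ht

theorem Real.one_add_sq_rpow_quarter_le_sqrt {s : ℝ} (hs : 0 ≤ s) :
    (1 + s ^ 2) ^ (1 / 4 : ℝ) ≤ √(1 + s) := by
  calc (1 + s ^ 2) ^ (1 / 4 : ℝ) ≤ ((1 + s) ^ 2) ^ (1 / 4 : ℝ) :=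
        Real.rpow_le_rpow (by positivity) (by nlinarith) (by norm_num)
    _ = √(1 + s) := by
      rw [← Real.rpow_natCast, ← Real.rpow_mul (by positivity), Real.sqrt_eq_rpow]
      norm_num

theorem stmt10_general (d : ℕ)
    (c1 c2 n1 n2 : ℝ) (hc1 : 0 < c1) (hc2 : 0 < c2)
    (hcond : (c1 - c2) * (c1 * n1 - c2 * n2) < 0) :
    ∃ δ₁ > (0 : ℝ), ∃ C₀ > (0 : ℝ), ∃ C > (0 : ℝ),
      ∀ (lam : ℂ) (σ : ℝ) (ρ1 ρ2 : ℂ),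
        C₀ ≤ lam.re → |lam.im| ≤ δ₁ * lam.re → 0 ≤ σ →
        ρ1 ^ 2 = ((σ : ℂ) + (((d : ℂ) - 2) / 2) ^ 2) * lam⁻¹ ^ 2 - (n1 / c1 : ℝ) →
        ρ2 ^ 2 = ((σ : ℂ) + (((d : ℂ) - 2) / 2) ^ 2) * lam⁻¹ ^ 2 - (n2 / c2 : ℝ) →
        0 < ρ1.re → 0 < ρ2.re →
        (c1 : ℂ) * ρ1 - (c2 : ℂ) * ρ2 ≠ 0 ∧
        C⁻¹ * (1 + (σ / ‖lam‖ ^ 2) ^ 2) ^ ((1 : ℝ) / 4) ≤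
          ‖(c1 : ℂ) * ρ1 - (c2 : ℂ) * ρ2‖ := by
  set m : ℝ := ((d : ℝ) - 2) / 2
  set A := c1 ^ 2 - c2 ^ 2
  set B := c1 * n1 - c2 * n2
  have hAB : A * B < 0 := by
    rw [show A * B = (c1 + c2) * ((c1 - c2) * B) by ring]
    exact mul_neg_of_pos_of_neg (by positivity) hcond
  set c := min ((1 - (1 / 2) ^ 2) / (1 + (1 / 2) ^ 2) * |A|) |B|
  have hc : 0 < c := lt_min (mul_pos (by norm_num) (abs_pos.2 (left_ne_zero_of_mul hAB.ne)))
    (abs_pos.2 (right_ne_zero_of_mul hAB.ne))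
  set C := c1 * √(1 + m ^ 2 + |n1 / c1|) + c2 * √(1 + m ^ 2 + |n2 / c2|)
  have hC : 0 < C := by positivity
  refine ⟨1 / 2, by norm_num, 1, one_pos, C / c, by positivity, ?_⟩
  intro lam σ ρ1 ρ2 hre him hσ hρ1 hρ2 _ _
  set s := σ / ‖lam‖ ^ 2
  have hz : (σ : ℂ) + (((d : ℂ) - 2) / 2) ^ 2 = ((σ + m ^ 2 : ℝ) : ℂ) := by
    push_cast [m]; ring
  rw [hz] at hρ1 hρ2
  have hN : c * (1 + s) ≤ ‖(A : ℂ) * (((σ + m ^ 2 : ℝ) : ℂ) * lam⁻¹ ^ 2) - B‖ :=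
    min_mul_one_add_div_le_norm_mul_sub hAB him (by norm_num) hσ
      (le_add_of_nonneg_right (sq_nonneg m))
  have hD : ‖(c1 : ℂ) * ρ1 + c2 * ρ2‖ ≤ C * √(1 + s) :=
    norm_mul_add_mul_le hc1.le hc2.le hσ (hre.trans (re_le_norm lam)) hρ1 hρ2
  have hg : c / C * √(1 + s) ≤ ‖(c1 : ℂ) * ρ1 - c2 * ρ2‖ := by
    refine Real.div_mul_le_of_mul_sq_le_mul hC (by positivity) (norm_nonneg _) ?_ hD
    rw [Real.sq_sqrt (by positivity), ← norm_mul,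
      mul_sub_mul_mul_mul_add_mul hc1.ne' hc2.ne' hρ1 hρ2]
    exact hN
  refine ⟨norm_pos_iff.1 (lt_of_lt_of_le (by positivity) hg), ?_⟩
  rw [inv_div]
  calc c / C * (1 + s ^ 2) ^ (1 / 4 : ℝ) ≤ c / C * √(1 + s) := by
        gcongr
        exact Real.one_add_sq_rpow_quarter_le_sqrt (by positivity)
    _ ≤ _ := hg

/-- Anisotropic case: `(c̃₁ − c̃₂)(c̃₁ñ₁ − c̃₂ñ₂) < 0`. Then `g(σ) = c̃₁ρ̃₁(σ) − c̃₂ρ̃₂(σ)`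
is nonzero for all `σ ≥ 0` and `|g(σ)| ≥ C⁻¹⟨σ/|λ|²⟩^{1/2}`, for `λ` with `Re λ ≥ C₀`,
`|Im λ| ≤ δ₁ Re λ`. -/
theorem stmt10 (d : ℕ) (hd : 2 ≤ d)
    (c1 c2 n1 n2 : ℝ) (hc1 : 0 < c1) (hc2 : 0 < c2) (hn1 : 0 < n1) (hn2 : 0 < n2)
    (hcond : (c1 - c2) * (c1 * n1 - c2 * n2) < 0) :
    ∃ δ₁ > (0 : ℝ), ∃ C₀ > (0 : ℝ), ∃ C > (0 : ℝ),
      ∀ (lam : ℂ) (σ : ℝ) (ρ1 ρ2 : ℂ),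
        C₀ ≤ lam.re → |lam.im| ≤ δ₁ * lam.re → 0 ≤ σ →
        ρ1 ^ 2 = ((σ : ℂ) + (((d : ℂ) - 2) / 2) ^ 2) * lam⁻¹ ^ 2 - (n1 / c1 : ℝ) →
        ρ2 ^ 2 = ((σ : ℂ) + (((d : ℂ) - 2) / 2) ^ 2) * lam⁻¹ ^ 2 - (n2 / c2 : ℝ) →
        0 < ρ1.re → 0 < ρ2.re →
        (c1 : ℂ) * ρ1 - (c2 : ℂ) * ρ2 ≠ 0 ∧
        C⁻¹ * (1 + (σ / ‖lam‖ ^ 2) ^ 2) ^ ((1 : ℝ) / 4) ≤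
          ‖(c1 : ℂ) * ρ1 - (c2 : ℂ) * ρ2‖ :=
  stmt10_general d c1 c2 n1 n2 hc1 hc2 hcond
end
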